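/- Let s be a square root on an MV-algebra M with top element 1, and suppose s is strict, i.e., s(0) = s(0)'. Then the only idempotent element a of M with s(0) ≤ a is a = 1. -/
import Mathlib


class MVAlg (M : Type*) where
  add : M → M → M
  compl : M → M
  zero : M
  one : M
  add_comm : ∀ x y, add x y = add y x
  add_assoc : ∀ x y z, add (add x y) z = add x (add y z)
  add_zero : ∀ x, add x zero = x
  compl_compl : ∀ x, compl (compl x) = x
  add_one : ∀ x, add x one = one
  chang : ∀ x y, add x (compl (add x (compl y))) = add y (compl (add y (compl x)))
  compl_zero : compl zero = one

namespace MVAlg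

variable {M : Type*} [MVAlg M]

/-- x ⊙ y := (x' ⊕ y')' -/
def odot (x y : M) : M := compl (add (compl x) (compl y))

/-- x ≤ y iff x' ⊕ y = 1 -/
def le (x y : M) : Prop := add (compl x) y = one

/-- x ∧ y := x ⊙ (x' ⊕ y) -/
def inf (x y : M) : M := odot x (add (compl x) y)

/-- x ∨ y := (x ⊙ y') ⊕ y -/
def sup (x y : M) : M := add (odot x (compl y)) y

/-- x ⊖ y := x ⊙ y' -/
def sub (x y : M) : M := odot x (compl y)

/-- A square root on an MV-algebra. -/
def IsSquareRoot (s : M → M) : Prop :=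
  (∀ x : M, odot (s x) (s x) = x) ∧ ∀ x y : M, le (odot y y) x → le y (s x)

end MVAlg


namespace MVAlg

variable {M : Type*} [MVAlg M]

lemma compl_one' : (compl (one : M)) = zero := by
  rw [← compl_zero, compl_compl]

lemma zero_add' (x : M) : add zero x = x := by rw [add_comm]; exact add_zero x

lemma one_add' (x : M) : add one x = one := by rw [add_comm]; exact add_one x

lemma add_compl' (x : M) : add x (compl x) = one := by
  have h := chang x (one : M)
  rw [compl_one', add_zero, one_add'] at h
  exact h

lemma compl_add' (x : M) : add (compl x) x = one := by
  rw [add_comm]; exact add_compl' x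

lemma le_add_right' (x z : M) : le x (add x z) := by
  unfold le
  rw [← add_assoc, compl_add', one_add']

lemma eq_add_of_le' {x y : M} (h : le x y) : y = add x (compl (add x (compl y))) := by
  have hc := chang x y
  unfold le at h
  rw [add_comm y (compl x), h, compl_one', add_zero] at hc
  exact hc.symm

lemma le_trans' {x y z : M} (h1 : le x y) (h2 : le y z) : le x z := by
  unfold le at h1 ⊢
  rw [eq_add_of_le' h2, ← add_assoc, h1, one_add']

lemma add_le_add_right' {x y : M} (z : M) (h : le x y) : le (add x z) (add y z) := by
  have hy := eq_add_of_le' h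
  unfold le
  rw [hy, add_assoc x (compl (add x (compl y))) z,
    add_comm (compl (add x (compl y))) z,
    ← add_assoc x z (compl (add x (compl y))),
    ← add_assoc (compl (add x z)) (add x z) (compl (add x (compl y))),
    compl_add', one_add']

lemma compl_le_compl' {x y : M} (h : le x y) : le (compl y) (compl x) := by
  unfold le at h ⊢
  rw [compl_compl, add_comm]
  exact h

lemma odot_le_odot_right' {x y : M} (z : M) (h : le x y) :
    le (odot x z) (odot y z) := by
  unfold odot
  exact compl_le_compl' (add_le_add_right' (compl z) (compl_le_compl' h))

lemma odot_comm' (x y : M) : odot x y = odot y x := by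
  unfold odot; rw [add_comm]

lemma odot_le_odot_left' {x y : M} (z : M) (h : le x y) :
    le (odot z x) (odot z y) := by
  rw [odot_comm' z x, odot_comm' z y]
  exact odot_le_odot_right' z h

end MVAlg

theorem strict_only_idempotent_above {M : Type*} [MVAlg M] (s : M → M)
    (hs : MVAlg.IsSquareRoot s) (hstrict : s MVAlg.zero = MVAlg.compl (s MVAlg.zero))
    (a : M) (ha : MVAlg.add a a = a) (hle : MVAlg.le (s MVAlg.zero) a) :
    a = MVAlg.one := by
  open MVAlg in
  have h1 : le (compl a) (s zero) := by
    unfold le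
    rw [MVAlg.compl_compl, hstrict, MVAlg.add_comm]
    exact hle
  have hidem : odot (compl a) (compl a) = compl a := by
    unfold odot
    rw [MVAlg.compl_compl, ha]
  have hz : odot (s zero) (s zero) = (zero : M) := hs.1 zero
  have h2 : le (odot (compl a) (compl a)) (odot (s zero) (compl a)) :=
    odot_le_odot_right' (compl a) h1
  have h3 : le (odot (s zero) (compl a)) (odot (s zero) (s zero)) :=
    odot_le_odot_left' (s zero) h1
  have h4 : le (compl a) (zero : M) := by
    rw [← hidem, ← hz]
    exact le_trans' h2 h3
  unfold le at h4
  rw [MVAlg.compl_compl, MVAlg.add_zero] at h4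
  exact h4
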